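/- Let Θ', Θ be spaces of input histories over the same (E, I), both satisfying the free-choice condition, with Θ' ≤ Θ (i.e. Ext(Θ') ⊇ Ext(Θ)). Let O, O' be output families with ∅ ≠ O'_ω ⊆ O_ω for all ω ∈ E. Then the map ι_{Θ'→Θ} : CausFun(Θ',O') → CausFun(Θ,O), f' ↦ Prime(Ext(f')|_{Ext(Θ)}), is well-defined and injective. Moreover these injections are stable under composition: for Θ'' ≤ Θ' ≤ Θ and output families O'' ⊆ O' ⊆ O (pointwise, all nonempty), ι_{Θ'→Θ} ∘ ι_{Θ''→Θ'} = ι_{Θ''→Θ}. -/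

import Mathlib

namespace Caus

/-- Partial functions over events `E` with value family `V`:
each event is assigned an optional value. -/
abbrev PF (E : Type) (V : E → Type) : Type := ∀ ω : E, Option (V ω)

variable {E : Type} {I O : E → Type}

/-- The total function `k` viewed as a partial function with full domain. -/
def toPF (k : ∀ ω : E, I ω) : PF E I := fun ω => some (k ω)

/-- Domain of a partial function. -/
def dom (h : PF E I) : Set E := {ω | (h ω).isSome}

/-- The order on partial functions: `h' ≤ h` iff `dom h' ⊆ dom h` and they agree on `dom h'`. -/
def le (h' h : PF E I) : Prop := ∀ ω : E, (h' ω).isSome → h' ω = h ω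

/-- Compatibility: agreeing on the intersection of the domains. -/
def Compat (h h' : PF E I) : Prop :=
  ∀ ω : E, (h ω).isSome → (h' ω).isSome → h ω = h' ω

/-- Join of two partial functions (union, when they are compatible). -/
def join (h h' : PF E I) : PF E I := fun ω => (h ω).orElse fun _ => h' ω

/-- `k` is the join (union) of the set `S` of partial functions. -/
def IsJoinOf (k : PF E I) (S : Set (PF E I)) : Prop :=
  ∀ (ω : E) (x : I ω), k ω = some x ↔ ∃ h ∈ S, h ω = some x

/-- `Ext Θ`: joins of nonempty pairwise-compatible subsets of `Θ`. -/
def Ext (Θ : Set (PF E I)) : Set (PF E I) :=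
  {k | ∃ S ⊆ Θ, S.Nonempty ∧ S.Pairwise Compat ∧ IsJoinOf k S}

/-- A space of input histories: every `h ∈ Θ` is ∨-prime in `Ext Θ`. -/
def IsSpace (Θ : Set (PF E I)) : Prop :=
  ∀ h ∈ Θ, ∀ k ∈ Ext Θ, ∀ k' ∈ Ext Θ, Compat k k' →
    le h (join k k') → le h k ∨ le h k'

/-- Tip events of `h` in `Θ`. -/
def tips (Θ : Set (PF E I)) (h : PF E I) : Set E :=
  {ω | ω ∈ dom h ∧ ∀ h' ∈ Θ, le h' h → h' ≠ h → ω ∉ dom h'}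

/-- Extended functions: the output partial function has the same domain as the input. -/
def IsExtFun (Θ : Set (PF E I)) (F : PF E I → PF E O) : Prop :=
  ∀ k ∈ Ext Θ, dom (F k) = dom k

/-- The consistency condition for extended functions. -/
def Consistent (Θ : Set (PF E I)) (F : PF E I → PF E O) : Prop :=
  ∀ k ∈ Ext Θ, ∀ k' ∈ Ext Θ, le k' k → le (F k') (F k)

/-- `h` and `h'` are constrained at `ω`: both have tip `ω` and every consistent
extended function with binary outputs takes the same value at `ω` on them. -/
def Constr (Θ : Set (PF E I)) (ω : E) (h h' : PF E I) : Prop :=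
  h ∈ Θ ∧ h' ∈ Θ ∧ ω ∈ tips Θ h ∧ ω ∈ tips Θ h' ∧
  ∀ F : PF E I → PF E (fun _ => Bool),
    IsExtFun Θ F → Consistent Θ F → F h ω = F h' ω

/-- Causal function conditions: `f h` is an assignment of outputs to the tips of `h`,
with equal outputs on histories constrained at an event. -/
def IsCausFun (Θ : Set (PF E I)) (f : PF E I → PF E O) : Prop :=
  (∀ h ∈ Θ, dom (f h) = tips Θ h) ∧
  ∀ (ω : E) (h h' : PF E I), Constr Θ ω h h' → f h ω = f h' ω

/-- Causal functions for `Θ` with outputs `W` (normalized to `none` outside `Θ`). -/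
def CausFunSet (Θ : Set (PF E I)) (W : E → Type) : Set (PF E I → PF E W) :=
  {f | IsCausFun Θ f ∧ ∀ h ∉ Θ, ∀ ω : E, f h ω = none}

open Classical in
/-- The extended causal function `Ext f` of a causal function `f`. -/
noncomputable def extCF (Θ : Set (PF E I)) (f : PF E I → PF E O) : PF E I → PF E O :=
  fun k ω =>
    if hh : ∃ h, h ∈ Θ ∧ le h k ∧ ω ∈ tips Θ h then f hh.choose ω else none

open Classical in
/-- `Prime F̂`: the causal function underlying a consistent extended function. -/
noncomputable def primeCF (Θ : Set (PF E I)) (F : PF E I → PF E O) : PF E I → PF E O :=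
  fun h ω => if h ∈ Θ ∧ ω ∈ tips Θ h then F h ω else none

open Classical in
/-- Restriction of a causal function to a lowerset (normalized outside it). -/
noncomputable def restrictCF (lam : Set (PF E I)) (f : PF E I → PF E O) :
    PF E I → PF E O :=
  fun h => if h ∈ lam then f h else fun _ => none

/-- The free-choice condition. -/
def FreeChoice (Θ : Set (PF E I)) : Prop := ∀ k : ∀ ω : E, I ω, toPF k ∈ Ext Θ

/-- Tightness. -/
def Tight (Θ : Set (PF E I)) : Prop :=
  ∀ k ∈ Ext Θ, ∀ ω ∈ dom k, ∃! h, h ∈ Θ ∧ le h k ∧ ω ∈ tips Θ h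

/-- Maximal extended input histories. -/
def maxExt (Θ : Set (PF E I)) : Set (PF E I) :=
  {k | k ∈ Ext Θ ∧ ∀ k' ∈ Ext Θ, le k k' → k' = k}

/-- Lowersets (downward-closed subsets) of a space `Θ`. -/
def IsLowersetOf (Θ lam : Set (PF E I)) : Prop :=
  lam ⊆ Θ ∧ ∀ h ∈ lam, ∀ h' ∈ Θ, le h' h → h' ∈ lam


/-- Causal functions for `Θ` with ambient outputs `W`, whose values lie in the
subfamily `W'`. -/
def CausFunSetIn (Θ : Set (PF E I)) (W : E → Type) (W' : ∀ ω : E, Set (W ω)) :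
    Set (PF E I → PF E W) :=
  {f | f ∈ CausFunSet Θ W ∧ ∀ (g : PF E I) (ω : E) (x : W ω), f g ω = some x → x ∈ W' ω}

/-- The canonical injection `ι_{Θ'→Θ} : f' ↦ Prime (Ext f' |_{Ext Θ})`. -/
noncomputable def iotaCF (Θ' Θ : Set (PF E I)) (f : PF E I → PF E O) :
    PF E I → PF E O :=
  primeCF Θ (extCF Θ' f)

/-! Every extended input history of `Θ` lies in `Ext Θ'`, so `Ext f'` restricts to a consistent
extended function on `Θ`, and `Prime` of a consistent extended function is causal. As
`Ext ∘ Prime` is the identity on consistent extended functions, `Ext (ι f')` is the restriction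
of `Ext f'` to `Ext Θ`. Composition follows at once. Injectivity follows because, by free
choice, `Ext Θ` contains every total input history, and a causal function is recovered from its
extension to total histories. -/

theorem le.trans {a b c : PF E I} (hab : le a b) (hbc : le b c) : le a c := by
  intro ω hs
  rw [hab ω hs, hbc ω (hab ω hs ▸ hs)]

theorem le.dom_subset {a b : PF E I} (hab : le a b) : dom a ⊆ dom b := fun ω hω =>
  show (b ω).isSome from hab ω hω ▸ hω

theorem le.eq_of_dom_subset {a b : PF E I} (hab : le a b) (hd : dom b ⊆ dom a) : a = b := by
  funext ω
  by_cases hs : (a ω).isSome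
  · exact hab ω hs
  · cases hb : b ω with
    | none => simpa using hs
    | some _ => exact absurd (hd (by simp [dom, hb])) hs

theorem compat_of_le {a b k : PF E I} (ha : le a k) (hb : le b k) : Compat a b :=
  fun ω hsa hsb => (ha ω hsa).trans (hb ω hsb).symm

theorem le_join_left (h h' : PF E I) : le h (join h h') := by
  intro ω hs
  obtain ⟨x, hx⟩ := Option.isSome_iff_exists.mp hs
  simp [join, hx]

theorem le_join_right {h h' : PF E I} (hc : Compat h h') : le h' (join h h') := by
  intro ω hs
  cases hω : h ω with
  | none => simp [join, hω]
  | some y =>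
    have hy := hc ω (by simp [hω]) hs
    rw [hω] at hy
    simp [join, hω, ← hy]

theorem mem_Ext {Θ : Set (PF E I)} {h : PF E I} (hh : h ∈ Θ) : h ∈ Ext Θ :=
  ⟨{h}, Set.singleton_subset_iff.mpr hh, Set.singleton_nonempty h,
    Set.pairwise_singleton _ _, fun ω x => by simp⟩

theorem join_mem_Ext {Θ : Set (PF E I)} {h h' : PF E I} (hh : h ∈ Θ) (hh' : h' ∈ Θ)
    (hc : Compat h h') : join h h' ∈ Ext Θ := by
  refine ⟨{h, h'}, Set.insert_subset hh (Set.singleton_subset_iff.mpr hh'),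
    Set.insert_nonempty _ _,
    Set.pairwise_pair.mpr fun _ => ⟨hc, fun ω hs hs' => (hc ω hs' hs).symm⟩, fun ω x => ?_⟩
  simp only [Set.mem_insert_iff, Set.mem_singleton_iff, exists_eq_or_imp, exists_eq_left]
  refine ⟨fun hx => ?_, ?_⟩
  · cases hω : h ω with
    | none => exact Or.inr (by simpa [join, hω] using hx)
    | some y => exact Or.inl (by simpa [join, hω] using hx)
  · rintro (hx | hx)
    · rw [← le_join_left h h' ω (by simp [hx]), hx]
    · rw [← le_join_right hc ω (by simp [hx]), hx]

theorem exists_le_mem_dom_of_mem_Ext {Θ : Set (PF E I)} {k : PF E I} (hk : k ∈ Ext Θ)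
    {ω : E} (hω : ω ∈ dom k) : ∃ h ∈ Θ, le h k ∧ ω ∈ dom h := by
  obtain ⟨S, hSΘ, -, -, hjoin⟩ := hk
  obtain ⟨x, hx⟩ := Option.isSome_iff_exists.mp hω
  obtain ⟨h, hhS, hhx⟩ := (hjoin ω x).mp hx
  refine ⟨h, hSΘ hhS, fun ω' hs => ?_, by simp [dom, hhx]⟩
  obtain ⟨y, hy⟩ := Option.isSome_iff_exists.mp hs
  rw [hy, (hjoin ω' y).mpr ⟨h, hhS, hy⟩]

/-- A history of minimal domain among those below `k` containing `ω` has `ω` as a tip. -/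
theorem exists_mem_tips_of_le [Finite E] {Θ : Set (PF E I)} {k h₀ : PF E I} (hh₀ : h₀ ∈ Θ)
    (hle : le h₀ k) {ω : E} (hω : ω ∈ dom h₀) : ∃ h ∈ Θ, le h k ∧ ω ∈ tips Θ h := by
  obtain ⟨h, ⟨hΘ, hk, hωh⟩, hmin⟩ := (measure fun h : PF E I => (dom h).ncard).wf.has_min
    {h | h ∈ Θ ∧ le h k ∧ ω ∈ dom h} ⟨h₀, hh₀, hle, hω⟩
  refine ⟨h, hΘ, hk, hωh, fun h' hh' hle' hne hωh' => hmin h' ⟨hh', hle'.trans hk, hωh'⟩ ?_⟩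
  exact Set.ncard_lt_ncard (hle'.dom_subset.ssubset_of_ne
    fun hd => hne (hle'.eq_of_dom_subset hd.ge)) (Set.toFinite _)

theorem exists_mem_tips_of_mem_Ext [Finite E] {Θ : Set (PF E I)} {k : PF E I}
    (hk : k ∈ Ext Θ) {ω : E} (hω : ω ∈ dom k) : ∃ h ∈ Θ, le h k ∧ ω ∈ tips Θ h := by
  obtain ⟨h₀, hh₀, hle, hω₀⟩ := exists_le_mem_dom_of_mem_Ext hk hω
  exact exists_mem_tips_of_le hh₀ hle hω₀

theorem exists_le_toPF [∀ ω, Nonempty (I ω)] (h : PF E I) : ∃ k, le h (toPF k) := by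
  refine ⟨fun ω => (h ω).getD (Classical.arbitrary _), fun ω hs => ?_⟩
  obtain ⟨x, hx⟩ := Option.isSome_iff_exists.mp hs
  simp [toPF, hx]

section ExtFun

variable {Θ Θ' : Set (PF E I)} {F G : PF E I → PF E O}

theorem IsExtFun.isSome (hF : IsExtFun Θ F) {k : PF E I} (hk : k ∈ Ext Θ) {ω : E}
    (hω : ω ∈ dom k) : (F k ω).isSome :=
  show ω ∈ dom (F k) from (hF k hk).symm ▸ hω

theorem IsExtFun.mono (hF : IsExtFun Θ' F) (hle : Ext Θ ⊆ Ext Θ') : IsExtFun Θ F :=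
  fun k hk => hF k (hle hk)

theorem Consistent.mono (hF : Consistent Θ' F) (hle : Ext Θ ⊆ Ext Θ') : Consistent Θ F :=
  fun k hk k' hk' => hF k (hle hk) k' (hle hk')

theorem Consistent.apply_eq (hF : IsExtFun Θ F) (hcons : Consistent Θ F) {k k' : PF E I}
    (hk : k ∈ Ext Θ) (hk' : k' ∈ Ext Θ) (hle : le k' k) {ω : E} (hω : ω ∈ dom k') :
    F k' ω = F k ω :=
  hcons k hk k' hk' hle ω (hF.isSome hk' hω)

theorem constr_of_compat {h h' : PF E I} (hh : h ∈ Θ) (hh' : h' ∈ Θ) (hc : Compat h h')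
    {ω : E} (ht : ω ∈ tips Θ h) (ht' : ω ∈ tips Θ h') : Constr Θ ω h h' := by
  refine ⟨hh, hh', ht, ht', fun F hF hcons => ?_⟩
  have hj := join_mem_Ext hh hh' hc
  rw [hcons.apply_eq hF hj (mem_Ext hh) (le_join_left h h') ht.1,
    hcons.apply_eq hF hj (mem_Ext hh') (le_join_right hc) ht'.1]

/-- Binary outputs suffice: compose `F` with the indicator of the value `F h ω`. -/
theorem Constr.apply_eq (hF : IsExtFun Θ F) (hcons : Consistent Θ F) {ω : E}
    {h h' : PF E I} (hc : Constr Θ ω h h') : F h ω = F h' ω := by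
  classical
  obtain ⟨hh, hh', ht, ht', hbin⟩ := hc
  obtain ⟨x, hx⟩ := Option.isSome_iff_exists.mp (hF.isSome (mem_Ext hh) ht.1)
  obtain ⟨y, hy⟩ := Option.isSome_iff_exists.mp (hF.isSome (mem_Ext hh') ht'.1)
  let B : PF E I → PF E (fun _ => Bool) := fun k ω' => (F k ω').map fun z => decide (HEq z x)
  have hB : IsExtFun Θ B := fun k hk => by
    ext ω'
    simpa [B, dom] using Set.ext_iff.mp (hF k hk) ω'
  have hBcons : Consistent Θ B := fun k hk k' hk' hle ω' hs => by
    simp only [B, Option.isSome_map] at hs ⊢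
    rw [hcons k hk k' hk' hle ω' hs]
  have hxy := hbin B hB hBcons
  simp only [B, hx, hy, Option.map_some, heq_eq_eq, decide_true, Option.some.injEq] at hxy
  rw [hx, hy, of_decide_eq_true hxy.symm]

theorem IsCausFun.apply_eq_of_le {f : PF E I → PF E O} (hf : IsCausFun Θ f)
    {h₁ h₂ k : PF E I} (hh₁ : h₁ ∈ Θ) (hh₂ : h₂ ∈ Θ) (hle₁ : le h₁ k) (hle₂ : le h₂ k) {ω : E}
    (ht₁ : ω ∈ tips Θ h₁) (ht₂ : ω ∈ tips Θ h₂) : f h₁ ω = f h₂ ω :=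
  hf.2 ω h₁ h₂ (constr_of_compat hh₁ hh₂ (compat_of_le hle₁ hle₂) ht₁ ht₂)

theorem apply_eq_none_of_mem_causFunSet {W : E → Type} {f : PF E I → PF E W}
    (hf : f ∈ CausFunSet Θ W) {h : PF E I} {ω : E} (hω : ¬(h ∈ Θ ∧ ω ∈ tips Θ h)) :
    f h ω = none := by
  by_cases hh : h ∈ Θ
  · have hd := hf.1.1 h hh
    exact Option.not_isSome_iff_eq_none.mp fun hs => hω ⟨hh, hd ▸ (hs : ω ∈ dom (f h))⟩
  · exact hf.2 h hh ω

theorem primeCF_of_mem_tips {h : PF E I} (hh : h ∈ Θ) {ω : E} (ht : ω ∈ tips Θ h) :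
    primeCF Θ F h ω = F h ω :=
  if_pos ⟨hh, ht⟩

theorem primeCF_congr (hFG : ∀ h ∈ Θ, F h = G h) : primeCF Θ F = primeCF Θ G := by
  funext h ω
  unfold primeCF
  split_ifs with hh
  · rw [hFG h hh.1]
  · rfl

theorem primeCF_mem_causFunSet (hF : IsExtFun Θ F) (hcons : Consistent Θ F) :
    primeCF Θ F ∈ CausFunSet Θ O := by
  refine ⟨⟨fun h hh => ?_, fun ω h h' hc => ?_⟩, fun h hh ω => if_neg fun hc => hh hc.1⟩
  · ext ω
    by_cases ht : ω ∈ tips Θ h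
    · simpa [dom, primeCF_of_mem_tips hh ht, ht] using hF.isSome (mem_Ext hh) ht.1
    · simp [dom, primeCF, ht]
  · rw [primeCF_of_mem_tips hc.1 hc.2.2.1, primeCF_of_mem_tips hc.2.1 hc.2.2.2.1,
      hc.apply_eq hF hcons]

end ExtFun

section Extension

variable {Θ : Set (PF E I)} {f : PF E I → PF E O}

theorem extCF_of_mem_tips (hf : IsCausFun Θ f) {k h : PF E I} (hh : h ∈ Θ) (hle : le h k)
    {ω : E} (ht : ω ∈ tips Θ h) : extCF Θ f k ω = f h ω := by
  have hex : ∃ h', h' ∈ Θ ∧ le h' k ∧ ω ∈ tips Θ h' := ⟨h, hh, hle, ht⟩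
  rw [extCF, dif_pos hex]
  exact hf.apply_eq_of_le hex.choose_spec.1 hh hex.choose_spec.2.1 hle hex.choose_spec.2.2 ht

theorem isExtFun_extCF [Finite E] (hf : IsCausFun Θ f) : IsExtFun Θ (extCF Θ f) := by
  intro k hk
  ext ω
  constructor
  · intro hs
    simp only [dom, Set.mem_ofPred_eq, extCF] at hs
    split at hs
    · next hex => exact hex.choose_spec.2.1.dom_subset hex.choose_spec.2.2.1
    · simp at hs
  · intro hω
    obtain ⟨h, hh, hle, ht⟩ := exists_mem_tips_of_mem_Ext hk hω
    show (extCF Θ f k ω).isSome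
    rw [extCF_of_mem_tips hf hh hle ht]
    exact show ω ∈ dom (f h) from (hf.1 h hh).symm ▸ ht

theorem consistent_extCF (hf : IsCausFun Θ f) : Consistent Θ (extCF Θ f) := by
  intro k _ k' _ hle ω hs
  by_cases hex : ∃ h, h ∈ Θ ∧ le h k' ∧ ω ∈ tips Θ h
  · obtain ⟨h, hh, hle', ht⟩ := hex
    rw [extCF_of_mem_tips hf hh hle' ht, extCF_of_mem_tips hf hh (hle'.trans hle) ht]
  · simp [extCF, dif_neg hex] at hs

theorem extCF_primeCF [Finite E] {F : PF E I → PF E O} (hF : IsExtFun Θ F)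
    (hcons : Consistent Θ F) {k : PF E I} (hk : k ∈ Ext Θ) : extCF Θ (primeCF Θ F) k = F k := by
  funext ω
  by_cases hex : ∃ h, h ∈ Θ ∧ le h k ∧ ω ∈ tips Θ h
  · obtain ⟨h, hh, hle, ht⟩ := hex
    rw [extCF_of_mem_tips (primeCF_mem_causFunSet hF hcons).1 hh hle ht,
      primeCF_of_mem_tips hh ht, hcons.apply_eq hF hk (mem_Ext hh) hle ht.1]
  · have hω : ω ∉ dom k := fun hω => hex (exists_mem_tips_of_mem_Ext hk hω)
    rw [extCF, dif_neg hex]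
    exact (Option.not_isSome_iff_eq_none.mp fun hs => hω ((hF k hk) ▸ hs)).symm

theorem eq_of_extCF_toPF_eq [∀ ω, Nonempty (I ω)] {g : PF E I → PF E O}
    (hf : f ∈ CausFunSet Θ O) (hg : g ∈ CausFunSet Θ O)
    (hfg : ∀ k, extCF Θ f (toPF k) = extCF Θ g (toPF k)) : f = g := by
  funext h ω
  by_cases ht : h ∈ Θ ∧ ω ∈ tips Θ h
  · obtain ⟨k, hle⟩ := exists_le_toPF h
    rw [← extCF_of_mem_tips hf.1 ht.1 hle ht.2, ← extCF_of_mem_tips hg.1 ht.1 hle ht.2, hfg]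
  · rw [apply_eq_none_of_mem_causFunSet hf ht, apply_eq_none_of_mem_causFunSet hg ht]

end Extension

section Iota

variable {Θ'' Θ' Θ : Set (PF E I)} {f : PF E I → PF E O}

theorem iotaCF_mem_causFunSet [Finite E] (hle : Ext Θ ⊆ Ext Θ') (hf : IsCausFun Θ' f) :
    iotaCF Θ' Θ f ∈ CausFunSet Θ O :=
  primeCF_mem_causFunSet ((isExtFun_extCF hf).mono hle) ((consistent_extCF hf).mono hle)

theorem extCF_iotaCF [Finite E] (hle : Ext Θ ⊆ Ext Θ') (hf : IsCausFun Θ' f) {k : PF E I}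
    (hk : k ∈ Ext Θ) : extCF Θ (iotaCF Θ' Θ f) k = extCF Θ' f k :=
  extCF_primeCF ((isExtFun_extCF hf).mono hle) ((consistent_extCF hf).mono hle) hk

theorem iotaCF_iotaCF [Finite E] (hle : Ext Θ ⊆ Ext Θ') (hle' : Ext Θ' ⊆ Ext Θ'')
    (hf : IsCausFun Θ'' f) : iotaCF Θ' Θ (iotaCF Θ'' Θ' f) = iotaCF Θ'' Θ f :=
  primeCF_congr fun _ hh => extCF_iotaCF hle' hf (hle (mem_Ext hh))

end Iota

theorem stmt4_general {E : Type} [Fintype E] {I O : E → Type}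
    [∀ ω, Nonempty (I ω)]
    (Θ' Θ : Set (PF E I))
    (hFC : FreeChoice Θ)
    (hle : Ext Θ ⊆ Ext Θ')
    (O' : ∀ ω : E, Set (O ω)) :
    Set.MapsTo (iotaCF Θ' Θ) (CausFunSetIn Θ' O O') (CausFunSet Θ O) ∧
    Set.InjOn (iotaCF Θ' Θ) (CausFunSetIn Θ' O O') ∧
    (∀ Θ'' : Set (PF E I), IsSpace Θ'' → FreeChoice Θ'' → Ext Θ' ⊆ Ext Θ'' →
      ∀ O'' : ∀ ω : E, Set (O ω), (∀ ω, (O'' ω).Nonempty) → (∀ ω, O'' ω ⊆ O' ω) →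
      ∀ f ∈ CausFunSetIn Θ'' O O'',
        iotaCF Θ' Θ (iotaCF Θ'' Θ' f) = iotaCF Θ'' Θ f) := by
  refine ⟨fun f hf => iotaCF_mem_causFunSet hle hf.1.1, fun f hf g hg hfg => ?_,
    fun Θ'' _ _ hle' _ _ _ f hf => iotaCF_iotaCF hle hle' hf.1.1⟩
  refine eq_of_extCF_toPF_eq hf.1 hg.1 fun k => ?_
  rw [← extCF_iotaCF hle hf.1.1 (hFC k), hfg, extCF_iotaCF hle hg.1.1 (hFC k)]

/-- for spaces `Θ' ≤ Θ` (i.e. `Ext Θ ⊆ Ext Θ'`) over the same events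
and inputs, both satisfying the free-choice condition, and nested nonempty output
families `O' ⊆ O`, the map `ι_{Θ'→Θ}` is a well-defined injection from `CausFun(Θ',O')`
into `CausFun(Θ,O)`, and these injections are stable under composition. -/
theorem stmt4 {E : Type} [Fintype E] {I O : E → Type}
    [∀ ω, Nonempty (I ω)] [∀ ω, Nonempty (O ω)]
    (Θ' Θ : Set (PF E I)) (hS' : IsSpace Θ') (hS : IsSpace Θ)
    (hFC' : FreeChoice Θ') (hFC : FreeChoice Θ)
    (hle : Ext Θ ⊆ Ext Θ')
    (O' : ∀ ω : E, Set (O ω)) (hO' : ∀ ω, (O' ω).Nonempty) :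
    Set.MapsTo (iotaCF Θ' Θ) (CausFunSetIn Θ' O O') (CausFunSet Θ O) ∧
    Set.InjOn (iotaCF Θ' Θ) (CausFunSetIn Θ' O O') ∧
    (∀ Θ'' : Set (PF E I), IsSpace Θ'' → FreeChoice Θ'' → Ext Θ' ⊆ Ext Θ'' →
      ∀ O'' : ∀ ω : E, Set (O ω), (∀ ω, (O'' ω).Nonempty) → (∀ ω, O'' ω ⊆ O' ω) →
      ∀ f ∈ CausFunSetIn Θ'' O O'',
        iotaCF Θ' Θ (iotaCF Θ'' Θ' f) = iotaCF Θ'' Θ f) :=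
  stmt4_general Θ' Θ hFC hle O'

end Caus
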